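/- Let q = p^n, p ≡ 3 (mod 4), n odd, and E ⊆ F_q^2. Define ν_T(t) for t = (t₁,t₂,t₃) ∈ F_q³ as the number of triples (x,y,z) ∈ E³ with ||x−y|| = t₁, ||x−z|| = t₂, ||y−z|| = t₃. Then Σ_{t ∈ F_q³} ν_T(t)² ≤ C Σ_{θ ∈ O_2(F_q)} Σ_{w ∈ F_q^2} λ_θ(w)³, where λ_θ(w) = |{(u,v) ∈ E² : u − θv = w}|. -/

import Mathlib

def lamCount {F : Type} [Field F] [Fintype F] [DecidableEq F]
    (E : Finset (Fin 2 → F)) (θ : Matrix (Fin 2) (Fin 2) F) (w : Fin 2 → F) : ℕ :=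
  ((E ×ˢ E).filter (fun uv => uv.1 - θ.mulVec uv.2 = w)).card

def nuT {F : Type} [Field F] [Fintype F] [DecidableEq F]
    (E : Finset (Fin 2 → F)) (t : Fin 3 → F) : ℕ :=
  ((E ×ˢ E ×ˢ E).filter (fun xyz =>
    (∑ i, (xyz.1 i - xyz.2.1 i) ^ 2) = t 0 ∧
    (∑ i, (xyz.1 i - xyz.2.2 i) ^ 2) = t 1 ∧
    (∑ i, (xyz.2.1 i - xyz.2.2 i) ^ 2) = t 2)).card

/-
Since `-1` is not a square in `F_q` for `q = p ^ n`, `p ≡ 3 (mod 4)`, `n` odd, the form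
`x₁² + x₂²` is anisotropic. Then a nonzero `u` determines `v` through `u ⬝ v` and the wedge
`u₀ v₁ - u₁ v₀` (Lagrange: `(u ⬝ v)² + wedge² = (u ⬝ u)(v ⬝ v)`), and it follows that two triangles
`(x, y, z)`, `(x', y', z')` with the same side lengths are congruent: some `θ ∈ O₂(F_q)` has
`x - θ x' = y - θ y' = z - θ z'`, a rotation or a rotation composed with a reflection according
to the sign of the wedges.

`∑ ν_T(t)²` counts pairs of triangles with equal side lengths, and `∑_w λ_θ(w)³` counts triples
of pairs `(u, v) ∈ E²` sharing the value `u - θ v`. Sending a congruent pair to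
`((x, x'), (y, y'), (z, z'))` injects the former set into the union over `θ` of the latter, so
the inequality holds with `C = 1`.
-/

open Finset Matrix

section Counting

variable {α β : Type*} [DecidableEq β] [Fintype β]

lemma sum_card_filter_eq_sq (s : Finset α) (f : α → β) :
    ∑ b, #{a ∈ s | f a = b} ^ 2 = #{p ∈ s ×ˢ s | f p.1 = f p.2} := by
  rw [card_eq_sum_card_fiberwise (f := fun p => f p.1) (t := univ) fun _ _ => mem_univ _]
  refine sum_congr rfl fun b _ => ?_
  rw [sq, ← card_product, filter_filter]
  congr 1
  ext ⟨a, a'⟩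
  simp only [mem_product, mem_filter]
  grind

lemma sum_card_filter_eq_cube (s : Finset α) (f : α → β) :
    ∑ b, #{a ∈ s | f a = b} ^ 3 =
      #{p ∈ s ×ˢ s ×ˢ s | f p.1 = f p.2.1 ∧ f p.1 = f p.2.2} := by
  rw [card_eq_sum_card_fiberwise (f := fun p => f p.1) (t := univ) fun _ _ => mem_univ _]
  refine sum_congr rfl fun b _ => ?_
  rw [pow_three, ← card_product, ← card_product, filter_filter]
  congr 1
  ext ⟨a, a', a''⟩
  simp only [mem_product, mem_filter]
  grind

end Counting

lemma not_isSquare_neg_one_of_card_eq_pow {F : Type*} [Field F] [Fintype F] {p n : ℕ}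
    (hp : p % 4 = 3) (hn : Odd n) (hcard : Fintype.card F = p ^ n) : ¬IsSquare (-1 : F) := by
  rw [FiniteField.isSquare_neg_one_iff, hcard, not_not, Nat.pow_mod, hp]
  obtain ⟨k, rfl⟩ := hn
  norm_num [pow_succ, pow_mul, Nat.mul_mod, Nat.pow_mod]

section Plane

variable {F : Type*} [Field F]

def wedge (u v : Fin 2 → F) : F := u 0 * v 1 - u 1 * v 0

lemma eq_zero_of_dotProduct_self_eq_zero (hF : ¬IsSquare (-1 : F)) {v : Fin 2 → F}
    (hv : v ⬝ᵥ v = 0) : v = 0 := by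
  rw [vec2_dotProduct] at hv
  have h1 : v 1 = 0 := by
    by_contra h
    exact hF ⟨v 0 / v 1, by field_simp; linear_combination -hv⟩
  have h0 : v 0 = 0 := by simpa [h1, mul_self_eq_zero] using hv
  ext i; fin_cases i <;> simp [h0, h1]

lemma two_ne_zero_of_not_isSquare_neg_one (hF : ¬IsSquare (-1 : F)) : (2 : F) ≠ 0 :=
  fun h => hF ⟨1, by linear_combination -h⟩

lemma dotProduct_sq_add_wedge_sq (u v : Fin 2 → F) :
    (u ⬝ᵥ v) ^ 2 + wedge u v ^ 2 = (u ⬝ᵥ u) * (v ⬝ᵥ v) := by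
  simp only [vec2_dotProduct, wedge]; ring

lemma eq_of_dotProduct_eq_of_wedge_eq {u v w : Fin 2 → F} (hu : u ⬝ᵥ u ≠ 0)
    (hdot : u ⬝ᵥ v = u ⬝ᵥ w) (hwedge : wedge u v = wedge u w) : v = w := by
  simp only [vec2_dotProduct, wedge] at hu hdot hwedge
  refine funext fun i => mul_left_cancel₀ hu ?_
  fin_cases i <;> simp only [Fin.zero_eta, Fin.mk_one]
  · linear_combination u 0 * hdot - u 1 * hwedge
  · linear_combination u 1 * hdot + u 0 * hwedge

lemma wedge_mulVec (θ : Matrix (Fin 2) (Fin 2) F) (u v : Fin 2 → F) :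
    wedge (θ *ᵥ u) (θ *ᵥ v) = θ.det * wedge u v := by
  simp only [wedge, mulVec, vec2_dotProduct, det_fin_two]; ring

attribute [local instance] starRingOfComm

lemma dotProduct_mulVec_of_mem_orthogonalGroup {θ : Matrix (Fin 2) (Fin 2) F}
    (hθ : θ ∈ orthogonalGroup (Fin 2) F) (u v : Fin 2 → F) :
    (θ *ᵥ u) ⬝ᵥ (θ *ᵥ v) = u ⬝ᵥ v := by
  rw [dotProduct_comm, dotProduct_mulVec, ← mulVec_transpose, mulVec_mulVec,
    (mem_orthogonalGroup_iff' _ _).mp hθ, one_mulVec, dotProduct_comm]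

lemma exists_mem_specialOrthogonalGroup_mulVec_eq {u v : Fin 2 → F} (hv : v ⬝ᵥ v ≠ 0)
    (huv : u ⬝ᵥ u = v ⬝ᵥ v) : ∃ θ ∈ specialOrthogonalGroup (Fin 2) F, θ *ᵥ v = u := by
  have hLagrange := dotProduct_sq_add_wedge_sq v u
  refine ⟨!![(v ⬝ᵥ u) / (v ⬝ᵥ v), -(wedge v u / (v ⬝ᵥ v));
    wedge v u / (v ⬝ᵥ v), (v ⬝ᵥ u) / (v ⬝ᵥ v)], ?_, ?_⟩
  · simp only [of_mem_specialOrthogonalGroup_fin_two_iff, neg_sq, true_and]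
    field_simp
    rw [hLagrange, huv]; ring
  · simp only [vec2_dotProduct, wedge, ← sq] at hv ⊢
    ext i; fin_cases i <;> simp [mulVec, vecHead, vecTail] <;> field_simp <;> ring

lemma exists_mem_orthogonalGroup_mulVec_eq_mulVec_eq_of_ne_zero (hF : ¬IsSquare (-1 : F))
    {u v u' v' : Fin 2 → F} (hu : u ≠ 0) (huu : u ⬝ᵥ u = u' ⬝ᵥ u') (hvv : v ⬝ᵥ v = v' ⬝ᵥ v')
    (huv : u ⬝ᵥ v = u' ⬝ᵥ v') :
    ∃ θ ∈ orthogonalGroup (Fin 2) F, θ *ᵥ u' = u ∧ θ *ᵥ v' = v := by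
  have hu0 : u ⬝ᵥ u ≠ 0 := fun h => hu (eq_zero_of_dotProduct_self_eq_zero hF h)
  have hu'0 : u' ⬝ᵥ u' ≠ 0 := huu ▸ hu0
  -- `v` is determined by `u ⬝ᵥ v` and `wedge u v`, so only the orientation of `θ` matters.
  suffices ∃ θ ∈ orthogonalGroup (Fin 2) F, θ *ᵥ u' = u ∧ θ.det * wedge u' v' = wedge u v by
    obtain ⟨θ, hθ, hθu, hdet⟩ := this
    refine ⟨θ, hθ, hθu, eq_of_dotProduct_eq_of_wedge_eq hu0 ?_ ?_⟩
    · rw [← hθu, dotProduct_mulVec_of_mem_orthogonalGroup hθ, hθu, huv]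
    · rw [← hθu, wedge_mulVec, hθu, hdet]
  have hwedge : wedge u v ^ 2 = wedge u' v' ^ 2 := by
    have h := dotProduct_sq_add_wedge_sq u v
    rw [huu, hvv, huv, ← dotProduct_sq_add_wedge_sq u' v'] at h
    exact add_left_cancel h
  rcases sq_eq_sq_iff_eq_or_eq_neg.mp hwedge with h | h
  · obtain ⟨ρ, hρ, hρu⟩ := exists_mem_specialOrthogonalGroup_mulVec_eq hu'0 huu
    exact ⟨ρ, hρ.1, hρu, by rw [show ρ.det = 1 from hρ.2, one_mul, h]⟩
  · set J : Matrix (Fin 2) (Fin 2) F := !![1, 0; 0, -1]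
    have hJ : J ∈ orthogonalGroup (Fin 2) F := by
      rw [mem_orthogonalGroup_iff', ← Matrix.ext_iff]
      simp [J, Matrix.mul_apply, Fin.forall_fin_two]
    have hJu' : (J *ᵥ u') ⬝ᵥ (J *ᵥ u') = u' ⬝ᵥ u' :=
      dotProduct_mulVec_of_mem_orthogonalGroup hJ u' u'
    obtain ⟨ρ, hρ, hρu⟩ :=
      exists_mem_specialOrthogonalGroup_mulVec_eq (hJu' ▸ hu'0) (huu.trans hJu'.symm)
    refine ⟨ρ * J, mul_mem hρ.1 hJ, by rw [← mulVec_mulVec, hρu], ?_⟩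
    rw [det_mul, show ρ.det = 1 from hρ.2, h]
    simp [J, det_fin_two_of]

lemma exists_mem_orthogonalGroup_mulVec_eq_mulVec_eq (hF : ¬IsSquare (-1 : F))
    {u v u' v' : Fin 2 → F} (huu : u ⬝ᵥ u = u' ⬝ᵥ u') (hvv : v ⬝ᵥ v = v' ⬝ᵥ v')
    (huv : u ⬝ᵥ v = u' ⬝ᵥ v') :
    ∃ θ ∈ orthogonalGroup (Fin 2) F, θ *ᵥ u' = u ∧ θ *ᵥ v' = v := by
  by_cases hu : u = 0
  · by_cases hv : v = 0
    · have hu' := eq_zero_of_dotProduct_self_eq_zero hF (by simpa [hu] using huu.symm)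
      have hv' := eq_zero_of_dotProduct_self_eq_zero hF (by simpa [hv] using hvv.symm)
      exact ⟨1, one_mem _, by simp [hu, hu'], by simp [hv, hv']⟩
    · obtain ⟨θ, hθ, hθv, hθu⟩ := exists_mem_orthogonalGroup_mulVec_eq_mulVec_eq_of_ne_zero hF hv
        hvv huu (by rw [dotProduct_comm, huv, dotProduct_comm])
      exact ⟨θ, hθ, hθu, hθv⟩
  · exact exists_mem_orthogonalGroup_mulVec_eq_mulVec_eq_of_ne_zero hF hu huu hvv huv

lemma exists_mem_orthogonalGroup_sub_mulVec_eq (hF : ¬IsSquare (-1 : F))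
    {x y z x' y' z' : Fin 2 → F} (hxy : (x - y) ⬝ᵥ (x - y) = (x' - y') ⬝ᵥ (x' - y'))
    (hxz : (x - z) ⬝ᵥ (x - z) = (x' - z') ⬝ᵥ (x' - z'))
    (hyz : (y - z) ⬝ᵥ (y - z) = (y' - z') ⬝ᵥ (y' - z')) :
    ∃ θ ∈ orthogonalGroup (Fin 2) F, x - θ *ᵥ x' = y - θ *ᵥ y' ∧ x - θ *ᵥ x' = z - θ *ᵥ z' := by
  simp only [vec2_dotProduct, Pi.sub_apply] at hxy hxz hyz
  have polarization : (y - x) ⬝ᵥ (z - x) = (y' - x') ⬝ᵥ (z' - x') := by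
    apply mul_left_cancel₀ (two_ne_zero_of_not_isSquare_neg_one hF)
    simp only [vec2_dotProduct, Pi.sub_apply]
    linear_combination hxy + hxz - hyz
  obtain ⟨θ, hθ, hy, hz⟩ := exists_mem_orthogonalGroup_mulVec_eq_mulVec_eq hF
    (by simp only [vec2_dotProduct, Pi.sub_apply]; linear_combination hxy)
    (by simp only [vec2_dotProduct, Pi.sub_apply]; linear_combination hxz) polarization
  rw [mulVec_sub] at hy hz
  refine ⟨θ, hθ, ?_, ?_⟩
  · rw [sub_eq_sub_iff_sub_eq_sub, ← neg_sub y, ← hy, neg_sub]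
  · rw [sub_eq_sub_iff_sub_eq_sub, ← neg_sub z, ← hz, neg_sub]

end Plane

section Configurations

variable {F : Type} [Field F] [Fintype F] [DecidableEq F]

def pairwiseSqDist (a : (Fin 2 → F) × (Fin 2 → F) × (Fin 2 → F)) : Fin 3 → F :=
  ![(a.1 - a.2.1) ⬝ᵥ (a.1 - a.2.1), (a.1 - a.2.2) ⬝ᵥ (a.1 - a.2.2),
    (a.2.1 - a.2.2) ⬝ᵥ (a.2.1 - a.2.2)]

lemma nuT_eq_card_filter (E : Finset (Fin 2 → F)) (t : Fin 3 → F) :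
    nuT E t = #{a ∈ E ×ˢ E ×ˢ E | pairwiseSqDist a = t} := by
  simp [nuT, pairwiseSqDist, funext_iff, Fin.forall_fin_succ, dotProduct, sq]

lemma sum_nuT_sq (E : Finset (Fin 2 → F)) :
    ∑ t, nuT E t ^ 2 =
      #{ab ∈ (E ×ˢ E ×ˢ E) ×ˢ (E ×ˢ E ×ˢ E) | pairwiseSqDist ab.1 = pairwiseSqDist ab.2} := by
  simp only [nuT_eq_card_filter, sum_card_filter_eq_sq]

lemma sum_lamCount_cube (E : Finset (Fin 2 → F)) (θ : Matrix (Fin 2) (Fin 2) F) :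
    ∑ w, lamCount E θ w ^ 3 =
      #{c ∈ (E ×ˢ E) ×ˢ (E ×ˢ E) ×ˢ (E ×ˢ E) |
        c.1.1 - θ *ᵥ c.1.2 = c.2.1.1 - θ *ᵥ c.2.1.2 ∧
        c.1.1 - θ *ᵥ c.1.2 = c.2.2.1 - θ *ᵥ c.2.2.2} :=
  (sum_card_filter_eq_cube (E ×ˢ E) fun uv : (Fin 2 → F) × (Fin 2 → F) => uv.1 - θ *ᵥ uv.2 :)

attribute [local instance] starRingOfComm in
lemma card_congruent_le_sum_card (hF : ¬IsSquare (-1 : F)) (E : Finset (Fin 2 → F)) :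
    #{ab ∈ (E ×ˢ E ×ˢ E) ×ˢ (E ×ˢ E ×ˢ E) | pairwiseSqDist ab.1 = pairwiseSqDist ab.2} ≤
      ∑ θ ∈ univ.filter (fun θ : Matrix (Fin 2) (Fin 2) F => θᵀ * θ = 1),
        #{c ∈ (E ×ˢ E) ×ˢ (E ×ˢ E) ×ˢ (E ×ˢ E) |
          c.1.1 - θ *ᵥ c.1.2 = c.2.1.1 - θ *ᵥ c.2.1.2 ∧
          c.1.1 - θ *ᵥ c.1.2 = c.2.2.1 - θ *ᵥ c.2.2.2} := by
  refine (card_le_card_of_injOn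
    (fun ab => ((ab.1.1, ab.2.1), (ab.1.2.1, ab.2.2.1), (ab.1.2.2, ab.2.2.2))) ?_
    (fun ⟨⟨_, _, _⟩, _, _, _⟩ _ ⟨⟨_, _, _⟩, _, _, _⟩ _ h => by simp_all)).trans card_biUnion_le
  rintro ⟨⟨x, y, z⟩, x', y', z'⟩ hab
  simp only [coe_filter, Set.mem_ofPred_eq, mem_product, pairwiseSqDist, funext_iff,
    Fin.forall_fin_succ] at hab
  obtain ⟨⟨⟨hx, hy, hz⟩, hx', hy', hz'⟩, hxy, hxz, hyz, -⟩ := hab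
  obtain ⟨θ, hθ, h₁, h₂⟩ := exists_mem_orthogonalGroup_sub_mulVec_eq hF hxy hxz hyz
  simp only [coe_biUnion, coe_filter, mem_univ, true_and, Set.mem_iUnion, Set.mem_ofPred_eq,
    mem_product]
  exact ⟨θ, (mem_orthogonalGroup_iff' _ _).mp hθ, ⟨⟨hx, hx'⟩, ⟨hy, hy'⟩, hz, hz'⟩, h₁, h₂⟩

end Configurations

theorem stmt_19 :
    ∃ C : ℝ, 0 < C ∧
      ∀ (p n : ℕ), p.Prime → p % 4 = 3 → Odd n →
      ∀ (F : Type) [Field F] [Fintype F] [DecidableEq F], Fintype.card F = p ^ n →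
      ∀ (E : Finset (Fin 2 → F)),
        ∑ t : Fin 3 → F, (nuT E t : ℝ) ^ 2
          ≤ C * ∑ θ ∈ (Finset.univ.filter
              (fun θ : Matrix (Fin 2) (Fin 2) F => θ.transpose * θ = 1)),
              ∑ w : Fin 2 → F, (lamCount E θ w : ℝ) ^ 3 := by
  refine ⟨1, one_pos, fun p n _ hp hn F _ _ _ hcard E => ?_⟩
  have hF := not_isSquare_neg_one_of_card_eq_pow (F := F) hp hn hcard
  rw [one_mul]
  exact_mod_cast (sum_nuT_sq E).trans_le <| (card_congruent_le_sum_card hF E).trans_eq <|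
    sum_congr rfl fun θ _ => (sum_lamCount_cube E θ).symm
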